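/- The following relations hold among binary frame templates: Φ_{Y₁}⪯Φ_X, Φ_{Y₁}⪯Φ_C, Φ_{Y₀}⪯Φ_C, Φ_C⪯Φ_{CX}, and Φ_X⪯Φ_{CX}. -/

import Mathlib

open Matroid Set

namespace TemplatePaper

variable {α β γ : Type*}

/-- Matroid isomorphism. -/
def MIso (M : Matroid α) (N : Matroid β) : Prop :=
  ∃ f : α → β, Set.BijOn f M.E N.E ∧ ∀ I ⊆ M.E, (M.Indep I ↔ N.Indep (f '' I))

/-- `N` is the contraction `M ／ K`. -/
def IsContraction (N M : Matroid α) (K : Set α) : Prop :=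
  N.E = M.E \ K ∧
    ∀ I : Set α, N.Indep I ↔
      (I ⊆ M.E \ K ∧ ∃ J, M.IsBasis J (K ∩ M.E) ∧ M.Indep (I ∪ J))

/-- `N` is a minor of `M` (obtained by a contraction followed by a deletion). -/
def MinorOf (N M : Matroid α) : Prop :=
  ∃ (N₁ : Matroid α) (K D : Set α), IsContraction N₁ M K ∧ N = N₁ ↾ (N₁.E \ D)

/-- `M` has a minor isomorphic to `P`. -/
def HasIsoMinor (M : Matroid α) (P : Matroid β) : Prop :=
  ∃ N : Matroid α, MinorOf N M ∧ MIso P N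

/-- A simple matroid: every subset of the ground set with at most two elements
is independent. -/
def IsSimple (M : Matroid α) : Prop :=
  ∀ I ⊆ M.E, I.ncard ≤ 2 → M.Indep I

/-- The rank of a set in a matroid (as a natural number; intended for finite matroids). -/
noncomputable def rkOf (M : Matroid α) (X : Set α) : ℕ :=
  sSup {n | ∃ I, I ⊆ X ∧ M.Indep I ∧ I.ncard = n}

/-- The rank of a matroid. -/
noncomputable def rk (M : Matroid α) : ℕ := rkOf M M.E

/-- A matroid is vertically `k`-connected if for every partition `(X, Y)` of the ground
set with `r(X) + r(Y) - r(M) < k - 1`, either `X` or `Y` is spanning. -/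
def VertConn (M : Matroid α) (k : ℕ) : Prop :=
  ∀ X Y : Set α, X ∪ Y = M.E → Disjoint X Y →
    (rkOf M X : ℤ) + (rkOf M Y : ℤ) - (rk M : ℤ) < (k : ℤ) - 1 →
    M.Spanning X ∨ M.Spanning Y

/-- `M` is represented (on its ground set) by the matrix `A` over `F`:
independence in `M` coincides with linear independence of the corresponding columns. -/
def IsRepBy (F : Type*) [Field F] (M : Matroid α) (A : β → α → F) : Prop :=
  ∀ I ⊆ M.E, (M.Indep I ↔ LinearIndependent F (fun e : I => fun b => A b (e : α)))

/-- A binary matroid: a matroid representable over `GF(2)`. -/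
def IsBinary (M : Matroid α) : Prop :=
  ∃ (m : ℕ) (A : Fin m → α → ZMod 2), IsRepBy (ZMod 2) M A

/-- A graphic matroid: the cycle matroid of a graph.  Equivalently (as is standard for
binary matroids, and as used in the paper), a matroid representable over `GF(2)` by a
matrix in which every column has at most two nonzero entries. -/
def IsGraphic (M : Matroid α) : Prop :=
  ∃ (m : ℕ) (A : Fin m → α → ZMod 2),
    IsRepBy (ZMod 2) M A ∧ ∀ e ∈ M.E, {i | A i e ≠ 0}.ncard ≤ 2

/-- A cographic matroid: the dual of a graphic matroid. -/
def IsCographic (M : Matroid α) : Prop := IsGraphic M✶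

/-- `G` is (isomorphic to) the binary projective geometry `PG(m-1, 2)`:
its ground set is in bijection with the nonzero vectors of `GF(2)^m`, with independence
given by linear independence. -/
def IsPG (m : ℕ) (G : Matroid γ) : Prop :=
  ∃ f : γ → (Fin m → ZMod 2),
    Set.BijOn f G.E {v | v ≠ 0} ∧
    ∀ I ⊆ G.E, (G.Indep I ↔ LinearIndependent (ZMod 2) (fun e : I => f (e : γ)))

/-- The set of sizes of simple rank-`≤ r` matroids in a class `𝓜`; the growth rate
function of `𝓜` at `r` is the greatest element of this set. -/
def sizesOfRank (𝓜 : Set (Matroid ℕ)) (r : ℕ) : Set ℕ :=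
  {n | ∃ M ∈ 𝓜, M.E.Finite ∧ IsSimple M ∧ rk M ≤ r ∧ M.E.ncard = n}

/-- The growth rate function of `𝓜` agrees with `f` for all but finitely many `r`. -/
def GrowthRateEventually (𝓜 : Set (Matroid ℕ)) (f : ℕ → ℕ) : Prop :=
  ∃ N : ℕ, ∀ r ≥ N, IsGreatest (sizesOfRank 𝓜 r) (f r)

/-- A minor-closed class of matroids (closed under minors and isomorphism). -/
def MinorClosed (𝓜 : Set (Matroid ℕ)) : Prop :=
  (∀ M ∈ 𝓜, ∀ N : Matroid ℕ, MinorOf N M → N ∈ 𝓜) ∧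
  (∀ M ∈ 𝓜, ∀ N : Matroid ℕ, MIso N M → N ∈ 𝓜)

/-- The class of binary matroids with no minor isomorphic to `P`. -/
def EX (P : Matroid β) : Set (Matroid ℕ) :=
  {M | M.E.Finite ∧ IsBinary M ∧ ¬HasIsoMinor M P}

/-- The subgroup of `F^ℕ` of all vectors supported on the finite set `S`
(used to encode subgroups of `F^S` for varying index sets `S`). -/
def fullOn (F : Type*) [Field F] (S : Finset ℕ) : AddSubgroup (ℕ → F) where
  carrier := {v | ∀ i ∉ S, v i = 0}
  add_mem' := by
    intro a b ha hb i hi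
    simp [Pi.add_apply, ha i hi, hb i hi]
  zero_mem' := by intro i _; rfl
  neg_mem' := by
    intro a ha i hi
    simp [Pi.neg_apply, ha i hi]

/-- Restriction of a vector to the coordinates in `S` (zero elsewhere); used to encode
the projection of a subgroup of `F^T` into `F^S`. -/
def maskOn {F : Type*} [Field F] (S : Finset ℕ) (v : ℕ → F) : ℕ → F :=
  fun i => if i ∈ S then v i else 0

/-- A frame template over `F`.  The disjoint finite sets `C, X, Y₀, Y₁` are encoded as
disjoint finite subsets of `ℕ`; the matrix `A₁ ∈ F^{X × (C ∪ Y₀ ∪ Y₁)}` is encoded as a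
function `ℕ → ℕ → F` supported on `X × (C ∪ Y₀ ∪ Y₁)`; the subgroups
`Λ ≤ F^X` and `Δ ≤ F^{C ∪ Y₀ ∪ Y₁}` are encoded as subgroups of `F^ℕ` of vectors
supported on the relevant sets, closed under scaling by elements of `Γ`. -/
structure FrameTemplate (F : Type) [Field F] where
  Γ : Subgroup Fˣ
  C : Finset ℕ
  X : Finset ℕ
  Y0 : Finset ℕ
  Y1 : Finset ℕ
  disj : List.Pairwise Disjoint [C, X, Y0, Y1]
  A1 : ℕ → ℕ → F
  A1_supp : ∀ i j, A1 i j ≠ 0 → i ∈ X ∧ j ∈ C ∪ Y0 ∪ Y1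
  Δ : AddSubgroup (ℕ → F)
  Δ_supp : ∀ v ∈ Δ, ∀ j ∉ C ∪ Y0 ∪ Y1, v j = 0
  Δ_smul : ∀ γ ∈ Γ, ∀ v ∈ Δ, (γ : F) • v ∈ Δ
  Λ : AddSubgroup (ℕ → F)
  Λ_supp : ∀ v ∈ Λ, ∀ i ∉ X, v i = 0
  Λ_smul : ∀ γ ∈ Γ, ∀ v ∈ Λ, (γ : F) • v ∈ Λ

namespace FrameTemplate

variable {F : Type} [Field F]

/-- The column index set `C ∪ Y₀ ∪ Y₁` of `A₁`. -/
def CY (Φ : FrameTemplate F) : Finset ℕ := Φ.C ∪ Φ.Y0 ∪ Φ.Y1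

end FrameTemplate

section Columns

variable {F : Type} [Field F]

/-- A column that is zero on the rows in `S`. -/
def IsZeroColOn (S : Set ℕ) (v : ℕ → F) : Prop := ∀ b ∈ S, v b = 0

/-- A unit column on the rows in `S`. -/
def IsUnitColOn (S : Set ℕ) (v : ℕ → F) : Prop :=
  ∃ b ∈ S, v b = 1 ∧ ∀ b' ∈ S, b' ≠ b → v b' = 0

/-- A column of a `Γ`-frame matrix (restricted to the rows in `S`): at most two nonzero
entries, a nonzero column contains a `1`, and a second nonzero entry equals `-γ` for
some `γ ∈ Γ`. -/
def IsFrameColOn (Γ : Subgroup Fˣ) (S : Set ℕ) (v : ℕ → F) : Prop :=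
  IsZeroColOn S v ∨ IsUnitColOn S v ∨
    ∃ b₁ ∈ S, ∃ b₂ ∈ S, b₁ ≠ b₂ ∧ v b₁ = 1 ∧ (∃ γ ∈ Γ, v b₂ = -(γ : F)) ∧
      ∀ b ∈ S, b ≠ b₁ → b ≠ b₂ → v b = 0

end Columns

namespace FrameTemplate

variable {F : Type} [Field F]

/-- A matrix `A'` (with row set `B` and column set `E`, encoded as a function `ℕ → ℕ → F`
supported on `B × E`) respects the template `Φ`, with `Z ⊆ E` as the distinguished set of
columns, and with the columns of `A'[B - X, Z]` required to satisfy `zcol`.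
Taking `zcol` to be "unit column" gives `Respects`; allowing zero columns as well gives
`VRespects` (virtually respects). -/
def RespectsWith (zcol : Set ℕ → (ℕ → F) → Prop) (Φ : FrameTemplate F)
    (B E Z : Finset ℕ) (A' : ℕ → ℕ → F) : Prop :=
  Φ.X ⊆ B ∧ Φ.CY ⊆ E ∧ Z ⊆ E ∧ Disjoint Z Φ.CY ∧
  (∀ i j, A' i j ≠ 0 → i ∈ B ∧ j ∈ E) ∧
  (∀ i ∈ Φ.X, ∀ j ∈ Φ.CY, A' i j = Φ.A1 i j) ∧
  (∀ i ∈ Φ.X, ∀ j ∈ Z, A' i j = 0) ∧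
  (∀ j ∈ Z, zcol (↑B \ ↑Φ.X : Set ℕ) (fun i => A' i j)) ∧
  (∀ j ∈ E, j ∉ Φ.CY → j ∉ Z →
    IsFrameColOn Φ.Γ (↑B \ ↑Φ.X : Set ℕ) (fun i => A' i j)) ∧
  (∀ j ∈ E, j ∉ Φ.CY → j ∉ Z → maskOn Φ.X (fun i => A' i j) ∈ Φ.Λ) ∧
  (∀ i ∈ B, i ∉ Φ.X → maskOn Φ.CY (fun j => A' i j) ∈ Φ.Δ)

/-- `A'` respects `Φ`. -/
def Respects (Φ : FrameTemplate F) (B E Z : Finset ℕ) (A' : ℕ → ℕ → F) : Prop :=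
  RespectsWith (fun S v => IsUnitColOn S v) Φ B E Z A'

/-- `A'` virtually respects `Φ` (columns of `A'[B - X, Z]` may be unit or zero). -/
def VRespects (Φ : FrameTemplate F) (B E Z : Finset ℕ) (A' : ℕ → ℕ → F) : Prop :=
  RespectsWith (fun S v => IsZeroColOn S v ∨ IsUnitColOn S v) Φ B E Z A'

/-- `A` is constructed from `A'`: they agree outside the `Z`-columns, and each
`Z`-column of `A` is the corresponding column of `A'` plus some `Y₁`-column of `A'`. -/
def BuiltFrom (Φ : FrameTemplate F) (Z : Finset ℕ) (A' A : ℕ → ℕ → F) : Prop :=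
  (∀ j ∉ Z, ∀ i, A i j = A' i j) ∧
  (∀ j ∈ Z, ∃ y ∈ Φ.Y1, ∀ i, A i j = A' i j + A' i y)

end FrameTemplate

/-- `N` is the column (vector) matroid of the matrix `A` (rows indexed by `β`),
with ground set `E`. -/
def IsColMatroidOf {β : Type*} {F : Type} [Field F] (N : Matroid ℕ) (E : Finset ℕ)
    (A : β → ℕ → F) : Prop :=
  N.E = ↑E ∧ ∀ I : Set ℕ,
    (N.Indep I ↔ I ⊆ ↑E ∧ LinearIndependent F (fun e : I => fun i => A i (e : ℕ)))

namespace FrameTemplate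

variable {F : Type} [Field F]

/-- `M` conforms to `Φ` (with the respecting condition given by `resp`): `M` is isomorphic
to `M(A) ／ C ＼ Y₁` for a matrix `A` built from a matrix `A'` satisfying `resp`. -/
def ConformsWith (resp : FrameTemplate F → Finset ℕ → Finset ℕ → Finset ℕ →
      (ℕ → ℕ → F) → Prop) (M : Matroid α) (Φ : FrameTemplate F) : Prop :=
  ∃ (B E Z : Finset ℕ) (A' A : ℕ → ℕ → F) (N N₁ : Matroid ℕ),
    resp Φ B E Z A' ∧ Φ.BuiltFrom Z A' A ∧ IsColMatroidOf N E A ∧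
    IsContraction N₁ N ↑Φ.C ∧ MIso M (N₁ ↾ (N₁.E \ ↑Φ.Y1))

/-- `M` conforms to `Φ`. -/
def Conforms (M : Matroid α) (Φ : FrameTemplate F) : Prop :=
  ConformsWith (fun Φ B E Z A' => Φ.Respects B E Z A') M Φ

/-- `M` virtually conforms to `Φ`. -/
def VConforms (M : Matroid α) (Φ : FrameTemplate F) : Prop :=
  ConformsWith (fun Φ B E Z A' => Φ.VRespects B E Z A') M Φ

end FrameTemplate

namespace FrameTemplate

variable {F : Type} [Field F]

/-- Operation (1): replace `Γ` with a proper subgroup. -/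
def Op1 (Φ Φ' : FrameTemplate F) : Prop :=
  Φ'.Γ < Φ.Γ ∧ Φ'.C = Φ.C ∧ Φ'.X = Φ.X ∧ Φ'.Y0 = Φ.Y0 ∧ Φ'.Y1 = Φ.Y1 ∧
    Φ'.A1 = Φ.A1 ∧ Φ'.Δ = Φ.Δ ∧ Φ'.Λ = Φ.Λ

/-- Operation (2): replace `Λ` with a proper subgroup (closed under scaling by `Γ`). -/
def Op2 (Φ Φ' : FrameTemplate F) : Prop :=
  Φ'.Γ = Φ.Γ ∧ Φ'.C = Φ.C ∧ Φ'.X = Φ.X ∧ Φ'.Y0 = Φ.Y0 ∧ Φ'.Y1 = Φ.Y1 ∧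
    Φ'.A1 = Φ.A1 ∧ Φ'.Δ = Φ.Δ ∧ Φ'.Λ < Φ.Λ

/-- Operation (3): replace `Δ` with a proper subgroup (closed under scaling by `Γ`). -/
def Op3 (Φ Φ' : FrameTemplate F) : Prop :=
  Φ'.Γ = Φ.Γ ∧ Φ'.C = Φ.C ∧ Φ'.X = Φ.X ∧ Φ'.Y0 = Φ.Y0 ∧ Φ'.Y1 = Φ.Y1 ∧
    Φ'.A1 = Φ.A1 ∧ Φ'.Δ < Φ.Δ ∧ Φ'.Λ = Φ.Λ

/-- Operation (4): remove an element `y` from `Y₁`. -/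
def Op4 (Φ Φ' : FrameTemplate F) : Prop :=
  ∃ y ∈ Φ.Y1, Φ'.Γ = Φ.Γ ∧ Φ'.C = Φ.C ∧ Φ'.X = Φ.X ∧ Φ'.Y0 = Φ.Y0 ∧
    Φ'.Y1 = Φ.Y1.erase y ∧
    Φ'.A1 = (fun i j => if j = y then 0 else Φ.A1 i j) ∧
    (Φ'.Δ : Set (ℕ → F)) = maskOn Φ'.CY '' ↑Φ.Δ ∧ Φ'.Λ = Φ.Λ

/-- An elementary row operation on the rows indexed by `X`. -/
def ElemRowOp (X : Finset ℕ) (e : (ℕ → F) → (ℕ → F)) : Prop :=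
  (∃ x₁ ∈ X, ∃ x₂ ∈ X, x₁ ≠ x₂ ∧ e = fun v => v ∘ Equiv.swap x₁ x₂) ∨
  (∃ x ∈ X, ∃ c : F, c ≠ 0 ∧ e = fun v i => if i = x then c * v i else v i) ∨
  (∃ x₁ ∈ X, ∃ x₂ ∈ X, x₁ ≠ x₂ ∧
    ∃ c : F, e = fun v i => if i = x₂ then v i + c * v x₁ else v i)

/-- Operation (5): perform an elementary row operation on the `X`-rows of every matrix
respecting `Φ`; this alters `A₁` and performs a change of basis on `Λ`. -/
def Op5 (Φ Φ' : FrameTemplate F) : Prop :=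
  ∃ e, ElemRowOp Φ.X e ∧
    Φ'.Γ = Φ.Γ ∧ Φ'.C = Φ.C ∧ Φ'.X = Φ.X ∧ Φ'.Y0 = Φ.Y0 ∧ Φ'.Y1 = Φ.Y1 ∧
    Φ'.A1 = (fun i j => e (fun i' => Φ.A1 i' j) i) ∧
    Φ'.Δ = Φ.Δ ∧ (Φ'.Λ : Set (ℕ → F)) = e '' ↑Φ.Λ

/-- Operation (6): remove an element `x ∈ X` whose row is zero in every matrix
respecting `Φ`. -/
def Op6 (Φ Φ' : FrameTemplate F) : Prop :=
  ∃ x ∈ Φ.X, (∀ B E Z A', Φ.Respects B E Z A' → ∀ j, A' x j = 0) ∧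
    Φ'.Γ = Φ.Γ ∧ Φ'.C = Φ.C ∧ Φ'.X = Φ.X.erase x ∧ Φ'.Y0 = Φ.Y0 ∧ Φ'.Y1 = Φ.Y1 ∧
    Φ'.A1 = (fun i j => if i = x then 0 else Φ.A1 i j) ∧
    Φ'.Δ = Φ.Δ ∧ (Φ'.Λ : Set (ℕ → F)) = maskOn (Φ.X.erase x) '' ↑Φ.Λ

/-- Operation (7): contract an element `c ∈ C` whose `A₁`-column is a unit column with
its nonzero entry in row `x`, where `λ_x = 0` for all `λ ∈ Λ` or `δ_c = 0` for all
`δ ∈ Δ`; remove `c` from `C` and `x` from `X`. -/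
def Op7 (Φ Φ' : FrameTemplate F) : Prop :=
  ∃ c ∈ Φ.C, ∃ x ∈ Φ.X,
    Φ.A1 x c = 1 ∧ (∀ i, i ≠ x → Φ.A1 i c = 0) ∧
    ((∀ v ∈ Φ.Λ, v x = 0) ∨ (∀ v ∈ Φ.Δ, v c = 0)) ∧
    Φ'.Γ = Φ.Γ ∧ Φ'.C = Φ.C.erase c ∧ Φ'.X = Φ.X.erase x ∧
    Φ'.Y0 = Φ.Y0 ∧ Φ'.Y1 = Φ.Y1 ∧
    Φ'.A1 = (fun i j => if i = x ∨ j = c then 0 else Φ.A1 i j) ∧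
    (Φ'.Λ : Set (ℕ → F)) = maskOn (Φ.X.erase x) '' ↑Φ.Λ ∧
    (Φ'.Δ : Set (ℕ → F)) =
      maskOn Φ'.CY '' ((fun v : ℕ → F => v - v c • Φ.A1 x) '' ↑Φ.Δ)

/-- Operation (8): remove an element `c ∈ C` whose `A₁`-column is zero and with
`δ_c = 0` for all `δ ∈ Δ`. -/
def Op8 (Φ Φ' : FrameTemplate F) : Prop :=
  ∃ c ∈ Φ.C, (∀ i, Φ.A1 i c = 0) ∧ (∀ v ∈ Φ.Δ, v c = 0) ∧
    Φ'.Γ = Φ.Γ ∧ Φ'.C = Φ.C.erase c ∧ Φ'.X = Φ.X ∧ Φ'.Y0 = Φ.Y0 ∧ Φ'.Y1 = Φ.Y1 ∧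
    Φ'.A1 = Φ.A1 ∧ (Φ'.Δ : Set (ℕ → F)) = maskOn Φ'.CY '' ↑Φ.Δ ∧ Φ'.Λ = Φ.Λ

/-- Operation (10): remove an element `y` from `Y₀` (deleting `y` from every matroid
conforming to `Φ`). -/
def Op10 (Φ Φ' : FrameTemplate F) : Prop :=
  ∃ y ∈ Φ.Y0, Φ'.Γ = Φ.Γ ∧ Φ'.C = Φ.C ∧ Φ'.X = Φ.X ∧ Φ'.Y0 = Φ.Y0.erase y ∧
    Φ'.Y1 = Φ.Y1 ∧
    Φ'.A1 = (fun i j => if j = y then 0 else Φ.A1 i j) ∧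
    (Φ'.Δ : Set (ℕ → F)) = maskOn Φ'.CY '' ↑Φ.Δ ∧ Φ'.Λ = Φ.Λ

/-- Operation (11): for `x ∈ X` with `λ_x = 0` for every `λ ∈ Λ` and `y ∈ Y₀` whose
`A₁`-column is (after row operations, which are available as operation (5)) a unit
column with nonzero entry in row `x`, contract `y` from every matroid conforming
to `Φ`. -/
def Op11 (Φ Φ' : FrameTemplate F) : Prop :=
  ∃ y ∈ Φ.Y0, ∃ x ∈ Φ.X,
    (∀ v ∈ Φ.Λ, v x = 0) ∧ Φ.A1 x y = 1 ∧ (∀ i, i ≠ x → Φ.A1 i y = 0) ∧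
    Φ'.Γ = Φ.Γ ∧ Φ'.C = Φ.C ∧ Φ'.X = Φ.X.erase x ∧ Φ'.Y0 = Φ.Y0.erase y ∧
    Φ'.Y1 = Φ.Y1 ∧
    Φ'.A1 = (fun i j => if i = x ∨ j = y then 0 else Φ.A1 i j) ∧
    (Φ'.Λ : Set (ℕ → F)) = maskOn (Φ.X.erase x) '' ↑Φ.Λ ∧
    (Φ'.Δ : Set (ℕ → F)) =
      maskOn Φ'.CY '' ((fun v : ℕ → F => v - v y • Φ.A1 x) '' ↑Φ.Δ)

/-- Operation (12): for `y ∈ Y₀` with `δ_y = 0` for every `δ ∈ Δ`, contract `y` from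
every matroid conforming to `Φ`.  If the `A₁`-column of `y` is zero this just removes
`y`; otherwise (after row operations, available as operation (5)) the column of `y` is a
unit column with nonzero entry in some row `x`, which is removed together with `y`. -/
def Op12 (Φ Φ' : FrameTemplate F) : Prop :=
  ∃ y ∈ Φ.Y0, (∀ v ∈ Φ.Δ, v y = 0) ∧
    (((∀ i, Φ.A1 i y = 0) ∧
      Φ'.Γ = Φ.Γ ∧ Φ'.C = Φ.C ∧ Φ'.X = Φ.X ∧ Φ'.Y0 = Φ.Y0.erase y ∧ Φ'.Y1 = Φ.Y1 ∧
      Φ'.A1 = Φ.A1 ∧ (Φ'.Δ : Set (ℕ → F)) = maskOn Φ'.CY '' ↑Φ.Δ ∧ Φ'.Λ = Φ.Λ) ∨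
    (∃ x ∈ Φ.X, Φ.A1 x y = 1 ∧ (∀ i, i ≠ x → Φ.A1 i y = 0) ∧
      Φ'.Γ = Φ.Γ ∧ Φ'.C = Φ.C ∧ Φ'.X = Φ.X.erase x ∧ Φ'.Y0 = Φ.Y0.erase y ∧
      Φ'.Y1 = Φ.Y1 ∧
      Φ'.A1 = (fun i j => if i = x ∨ j = y then 0 else Φ.A1 i j) ∧
      (Φ'.Λ : Set (ℕ → F)) = maskOn (Φ.X.erase x) '' ↑Φ.Λ ∧
      (Φ'.Δ : Set (ℕ → F)) = maskOn Φ'.CY '' ↑Φ.Δ))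

/-- A single template operation, from Proposition 3.2 ((1)–(8)) and
Definition 3.3 ((10)–(12)). -/
def Step (Φ Φ' : FrameTemplate F) : Prop :=
  Op1 Φ Φ' ∨ Op2 Φ Φ' ∨ Op3 Φ Φ' ∨ Op4 Φ Φ' ∨ Op5 Φ Φ' ∨ Op6 Φ Φ' ∨ Op7 Φ Φ' ∨
    Op8 Φ Φ' ∨ Op10 Φ Φ' ∨ Op11 Φ Φ' ∨ Op12 Φ Φ'

/-- `Φ'` is a template minor of `Φ`: it is obtained from `Φ` by repeatedly performing
the operations (1)-(8) and (10)-(12). -/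
def IsTemplateMinor (Φ' Φ : FrameTemplate F) : Prop :=
  Relation.ReflTransGen Step Φ Φ'

/-- `M` weakly conforms to `Φ`: `M` virtually conforms to some template minor of `Φ`. -/
def WConforms (M : Matroid α) (Φ : FrameTemplate F) : Prop :=
  ∃ Φ'', IsTemplateMinor Φ'' Φ ∧ VConforms M Φ''

/-- The preorder on templates: `Φ ⪯ Φ'` iff every matroid weakly conforming to `Φ`
weakly conforms to `Φ'`, i.e. `𝓜_w(Φ) ⊆ 𝓜_w(Φ')`. -/
def Preceq (Φ Φ' : FrameTemplate F) : Prop :=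
  ∀ (α : Type) (M : Matroid α), WConforms M Φ → WConforms M Φ'

/-- Equivalence of templates: `𝓜_w(Φ) = 𝓜_w(Φ')`. -/
def TEquiv (Φ Φ' : FrameTemplate F) : Prop :=
  ∀ (α : Type) (M : Matroid α), WConforms M Φ ↔ WConforms M Φ'

/-- A binary frame template: a frame template over `GF(2)` with `Γ` trivial. -/
def IsBinaryT (Φ : FrameTemplate (ZMod 2)) : Prop := Φ.Γ = ⊥

end FrameTemplate

namespace FrameTemplate

lemma bot_smul_mem {F : Type} [Field F] (G : AddSubgroup (ℕ → F)) :
    ∀ γ ∈ (⊥ : Subgroup Fˣ), ∀ v ∈ G, (γ : F) • v ∈ G := by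
  intro γ hγ v hv
  rw [Subgroup.mem_bot] at hγ
  subst hγ
  simpa using hv

lemma bot_supp {F : Type} [Field F] (S : Finset ℕ) :
    ∀ v ∈ (⊥ : AddSubgroup (ℕ → F)), ∀ i ∉ S, v i = 0 := by
  intro v hv i _
  rw [AddSubgroup.mem_bot] at hv
  simp [hv]

lemma fullOn_supp {F : Type} [Field F] (S : Finset ℕ) :
    ∀ v ∈ fullOn F S, ∀ i ∉ S, v i = 0 := fun _ hv => hv

/-- The trivial template `Φ₀`: all groups trivial and all sets empty. -/
def Phi0 : FrameTemplate (ZMod 2) where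
  Γ := ⊥
  C := ∅
  X := ∅
  Y0 := ∅
  Y1 := ∅
  disj := by simp
  A1 := fun _ _ => 0
  A1_supp := by intro i j h; exact absurd rfl h
  Δ := ⊥
  Δ_supp := bot_supp _
  Δ_smul := bot_smul_mem _
  Λ := ⊥
  Λ_supp := bot_supp _
  Λ_smul := bot_smul_mem _

/-- The template `Φ_C`: all groups trivial and all sets empty except `|C| = 1` and
`Δ ≅ ℤ/2ℤ`. -/
def PhiC : FrameTemplate (ZMod 2) where
  Γ := ⊥
  C := {0}
  X := ∅
  Y0 := ∅
  Y1 := ∅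
  disj := by simp
  A1 := fun _ _ => 0
  A1_supp := by intro i j h; exact absurd rfl h
  Δ := fullOn (ZMod 2) {0}
  Δ_supp := by simpa using fullOn_supp (F := ZMod 2) {0}
  Δ_smul := bot_smul_mem _
  Λ := ⊥
  Λ_supp := bot_supp _
  Λ_smul := bot_smul_mem _

/-- The template `Φ_X`: all groups trivial and all sets empty except `|X| = 1` and
`Λ ≅ ℤ/2ℤ`. -/
def PhiX : FrameTemplate (ZMod 2) where
  Γ := ⊥
  C := ∅
  X := {0}
  Y0 := ∅
  Y1 := ∅
  disj := by simp
  A1 := fun _ _ => 0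
  A1_supp := by intro i j h; exact absurd rfl h
  Δ := ⊥
  Δ_supp := bot_supp _
  Δ_smul := bot_smul_mem _
  Λ := fullOn (ZMod 2) {0}
  Λ_supp := fullOn_supp _
  Λ_smul := bot_smul_mem _

/-- The template `Φ_{Y₀}`: all groups trivial and all sets empty except `|Y₀| = 1` and
`Δ ≅ ℤ/2ℤ`. -/
def PhiY0 : FrameTemplate (ZMod 2) where
  Γ := ⊥
  C := ∅
  X := ∅
  Y0 := {0}
  Y1 := ∅
  disj := by simp
  A1 := fun _ _ => 0
  A1_supp := by intro i j h; exact absurd rfl h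
  Δ := fullOn (ZMod 2) {0}
  Δ_supp := by simpa using fullOn_supp (F := ZMod 2) {0}
  Δ_smul := bot_smul_mem _
  Λ := ⊥
  Λ_supp := bot_supp _
  Λ_smul := bot_smul_mem _

/-- The template `Φ_{CX}`: `Y₀ = Y₁ = ∅`, `|C| = |X| = 1`, `Δ ≅ Λ ≅ ℤ/2ℤ`, `Γ` trivial,
and `A₁ = [1]`. -/
def PhiCX : FrameTemplate (ZMod 2) where
  Γ := ⊥
  C := {0}
  X := {1}
  Y0 := ∅
  Y1 := ∅
  disj := by simp
  A1 := fun i j => if i = 1 ∧ j = 0 then 1 else 0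
  A1_supp := by
    intro i j h
    by_cases hc : i = 1 ∧ j = 0
    · obtain ⟨hi, hj⟩ := hc
      subst hi; subst hj
      simp
    · simp [hc] at h
  Δ := fullOn (ZMod 2) {0}
  Δ_supp := by simpa using fullOn_supp (F := ZMod 2) {0}
  Δ_smul := bot_smul_mem _
  Λ := fullOn (ZMod 2) {1}
  Λ_supp := fullOn_supp _
  Λ_smul := bot_smul_mem _

/-- The template `Φ_{Y₁}`: all groups trivial, `C = Y₀ = ∅`, `|Y₁| = 3`, `|X| = 2`, and
`A₁ = [[1,0,1],[0,1,1]]` (rows `0, 1`; columns `2, 3, 4`). -/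
def PhiY1 : FrameTemplate (ZMod 2) where
  Γ := ⊥
  C := ∅
  X := {0, 1}
  Y0 := ∅
  Y1 := {2, 3, 4}
  disj := by simp [Finset.disjoint_left]
  A1 := fun i j =>
    if (i = 0 ∧ (j = 2 ∨ j = 4)) ∨ (i = 1 ∧ (j = 3 ∨ j = 4)) then 1 else 0
  A1_supp := by
    intro i j h
    by_cases hc : (i = 0 ∧ (j = 2 ∨ j = 4)) ∨ (i = 1 ∧ (j = 3 ∨ j = 4))
    · constructor
      · rcases hc with ⟨hi, _⟩ | ⟨hi, _⟩ <;> subst hi <;> simp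
      · rcases hc with ⟨_, hj | hj⟩ | ⟨_, hj | hj⟩ <;> subst hj <;> simp
    · simp [hc] at h
  Δ := ⊥
  Δ_supp := bot_supp _
  Δ_smul := bot_smul_mem _
  Λ := ⊥
  Λ_supp := bot_supp _
  Λ_smul := bot_smul_mem _

/-- A trivial template: one that is `⪯ Φ₀`. -/
def IsTrivialT (Φ : FrameTemplate (ZMod 2)) : Prop := Preceq Φ Phi0

variable {F : Type} [Field F]

/-- `Φ` is in standard form, with the witnessing partitions `C = C₀ ∪ C₁` and
`X = X₀ ∪ X₁`: `A₁[X₀, C₀]` is an identity matrix and `A₁[X₁, C]` is a zero matrix. -/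
def StandardFormOn (Φ : FrameTemplate F) (C0 C1 X0 X1 : Finset ℕ) : Prop :=
  Φ.C = C0 ∪ C1 ∧ Disjoint C0 C1 ∧ Φ.X = X0 ∪ X1 ∧ Disjoint X0 X1 ∧
  (∃ g : ℕ → ℕ, Set.BijOn g ↑X0 ↑C0 ∧
    ∀ x ∈ X0, ∀ c ∈ C0, Φ.A1 x c = if g x = c then 1 else 0) ∧
  (∀ x ∈ X1, ∀ c ∈ Φ.C, Φ.A1 x c = 0)

/-- `Φ` is in standard form. -/
def StandardForm (Φ : FrameTemplate F) : Prop :=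
  ∃ C0 C1 X0 X1, StandardFormOn Φ C0 C1 X0 X1

end FrameTemplate

/-!
After unwinding template minors, which never enlarge the index sets and keep `Δ = Λ = 0` for
`Φ_{Y₁}`, a matroid weakly conforming to `Φ_X`, `Φ_{Y₀}`, `Φ_C` or `Φ_{Y₁}` is (a contraction of)
the column matroid of a binary matrix whose columns have at most two nonzero entries away from a
few special rows and columns. To make it conform to the larger template, permute the rows and
adjoin a column `c` with a `1` in a fresh row `r`, to be contracted: the contraction replaces every
other column `d` by `d - d_r c`, so the remaining columns may be chosen freely as long as this
recovers the original ones. For `Φ_{Y₀} ⪯ Φ_C` the arbitrary column `0` is absorbed into `c`; for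
`Φ_{Y₁} ⪯ Φ_C` one takes `c = e₀ + e₁ + e_r` and adds `pq • c` to each column with entries `p, q`
in the two `X`-rows, which over `GF(2)` leaves at most one nonzero entry among the rows `0, 1, r`.
-/

open FrameTemplate

section LinearAlgebra

variable {ι K V : Type*} [Field K] [AddCommGroup V] [Module K V]

theorem linearIndepOn_insert_iff_sub_smul {f : ι → V} {s : Set ι} {z : ι} (hz : z ∉ s)
    (φ : V →ₗ[K] K) (hφ : φ (f z) = 1) :
    LinearIndepOn K f (insert z s) ↔ LinearIndepOn K (fun x => f x - φ (f x) • f z) s := by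
  classical
  set g : ι → V := fun x => f x - φ (f x) • f z
  set h : ι → V := fun x => if x = z then f z else g x
  have hfh : LinearIndepOn K f (insert z s) ↔ LinearIndepOn K h (insert z s) := by
    have := linearIndependent_add_smul_iff (R := K) (v := fun x : ↥(insert z s) => f x)
      (i := ⟨z, mem_insert z s⟩) (c := fun x => if (x : ι) = z then 0 else -φ (f x)) (by simp)
    refine this.symm.trans (iff_of_eq ?_)
    congr 1
    funext x
    by_cases hx : (x : ι) = z <;> simp [h, g, hx, sub_eq_add_neg]
  have hgφ : g '' s ⊆ LinearMap.ker φ := by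
    rintro _ ⟨x, -, rfl⟩
    simp [g, hφ]
  have hz_span : f z ∉ Submodule.span K (g '' s) := fun hmem => by
    simpa [hφ] using Submodule.span_le.mpr hgφ hmem
  have hhg : EqOn h g s := fun x hx => if_neg (ne_of_mem_of_not_mem hx hz)
  rw [hfh, linearIndepOn_insert hz, linearIndepOn_congr hhg, image_congr hhg]
  exact and_iff_left (by simpa [h] using hz_span)

theorem LinearIndepOn.exists_insert_of_ncard_lt {f : ι → V} {I J : Set ι}
    (hI : LinearIndepOn K f I) (hJ : LinearIndepOn K f J) (hIfin : I.Finite) (hJfin : J.Finite)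
    (hlt : I.ncard < J.ncard) : ∃ e ∈ J, e ∉ I ∧ LinearIndepOn K f (insert e I) := by
  by_contra! hcon
  have hspan : range (fun e : J => f e) ≤ Submodule.span K (f '' I) := by
    rintro _ ⟨⟨e, he⟩, rfl⟩
    by_cases heI : e ∈ I
    · exact Submodule.subset_span (mem_image_of_mem f heI)
    · by_contra hnot
      exact hcon e he heI ((linearIndepOn_insert heI).mpr ⟨hI, hnot⟩)
  have := hJfin.fintype
  have := (hIfin.image f).fintype
  have hle := linearIndependent_le_span_aux' _ hJ (f '' I) hspan
  rw [← Nat.card_eq_fintype_card, ← Nat.card_eq_fintype_card, Nat.card_coe_set_eq,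
    Nat.card_coe_set_eq] at hle
  have := ncard_image_le (f := f) hIfin
  omega

end LinearAlgebra

section Contraction

variable {α : Type*}

theorem isContraction_contract (M : Matroid α) (K : Set α) : IsContraction (M ／ K) M K := by
  refine ⟨rfl, fun I => ⟨fun hI => ?_, fun ⟨hIK, J, hJ, hIJ⟩ => ?_⟩⟩
  · obtain ⟨J, hJ⟩ := M.exists_isBasis (K ∩ M.E)
    refine ⟨hI.subset_ground, J, hJ, ?_⟩
    rw [← contract_inter_ground_eq, hJ.contract_indep_iff] at hI
    exact hI.1
  · rw [← contract_inter_ground_eq, hJ.contract_indep_iff]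
    exact ⟨hIJ, (disjoint_sdiff_right.mono_left inter_subset_left).mono_right hIK⟩

theorem IsContraction.eq_contract {N M : Matroid α} {K : Set α} (h : IsContraction N M K) :
    N = M ／ K :=
  ext_indep h.1 fun I _ => (h.2 I).trans ((isContraction_contract M K).2 I).symm

theorem MIso.trans {β γ : Type*} {M : Matroid α} {N : Matroid β} {P : Matroid γ}
    (h₁ : MIso M N) (h₂ : MIso N P) : MIso M P := by
  obtain ⟨f, hf, hfI⟩ := h₁
  obtain ⟨g, hg, hgI⟩ := h₂
  refine ⟨g ∘ f, hg.comp hf, fun I hI => ?_⟩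
  rw [hfI I hI, hgI _ ((image_mono hI).trans hf.mapsTo.image_subset), image_comp]

end Contraction

section ColumnMatroids

variable {F : Type} [Field F] {N N' : Matroid ℕ} {B E : Finset ℕ} {A : ℕ → ℕ → F}

theorem exists_isColMatroidOf (E : Finset ℕ) (A : ℕ → ℕ → F) :
    ∃ N, IsColMatroidOf N E A := by
  let Indep : Set ℕ → Prop := fun I => I ⊆ ↑E ∧ LinearIndepOn F (fun j i => A i j) I
  refine ⟨(IndepMatroid.ofFinite E.finite_toSet Indep
    ⟨empty_subset _, linearIndepOn_empty _ _⟩ (fun I J hJ hIJ => ⟨hIJ.trans hJ.1, hJ.2.mono hIJ⟩)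
    (fun I J hI hJ hlt => ?_) (fun I hI => hI.1)).matroid, rfl, fun I => Iff.rfl⟩
  obtain ⟨e, heJ, heI, hind⟩ := LinearIndepOn.exists_insert_of_ncard_lt hI.2 hJ.2
    (E.finite_toSet.subset hI.1) (E.finite_toSet.subset hJ.1) hlt
  exact ⟨e, heJ, heI, insert_subset (hJ.1 heJ) hI.1, hind⟩

theorem IsColMatroidOf.congr (h : IsColMatroidOf N E A) {A' : ℕ → ℕ → F}
    (hA : ∀ j ∈ E, ∀ i, A' i j = A i j) : IsColMatroidOf N E A' := by
  refine ⟨h.1, fun I => (h.2 I).trans (and_congr_right fun hI => ?_)⟩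
  exact linearIndepOn_congr (s := I) (v := fun j i => A i j) (w := fun j i => A' i j)
    fun j hj => funext fun i => (hA j (hI hj) i).symm

theorem IsColMatroidOf.delete (h : IsColMatroidOf N E A) (D : Finset ℕ) :
    IsColMatroidOf (N ＼ (D : Set ℕ)) (E \ D) A := by
  refine ⟨by rw [delete_ground, h.1, Finset.coe_sdiff], fun I => ?_⟩
  rw [delete_indep_iff, h.2, Finset.coe_sdiff, subset_sdiff]
  tauto

theorem IsColMatroidOf.comp_equiv (h : IsColMatroidOf N E A) (σ : ℕ ≃ ℕ) :
    IsColMatroidOf N E (fun i j => A (σ i) j) := by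
  refine ⟨h.1, fun I => (h.2 I).trans (and_congr_right fun _ => ?_)⟩
  exact ((LinearEquiv.funCongrLeft F F σ).toLinearMap.linearIndepOn_iff_of_injOn
    (v := fun j i => A i j) (s := I) (LinearEquiv.injective _).injOn).symm

theorem IsColMatroidOf.mIso_of_injective (h : IsColMatroidOf N E A) {A' : ℕ → ℕ → F}
    {e : ℕ → ℕ} (h' : IsColMatroidOf N' (E.image e) A') (he : e.Injective)
    (hA : ∀ k ∈ E, ∀ i, A' i (e k) = A i k) : MIso N N' := by
  refine ⟨e, ?_, fun I hI => ?_⟩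
  · rw [h.1, h'.1, Finset.coe_image]
    exact he.injOn.bijOn_image
  rw [h.1] at hI
  have hcomp : EqOn ((fun j i => A' i j) ∘ e) (fun j i => A i j) I :=
    fun k hk => funext (hA k (hI hk))
  rw [h.2, h'.2, Finset.coe_image, and_iff_right hI, and_iff_right (image_mono hI)]
  change LinearIndepOn F (fun j i => A i j) I ↔ LinearIndepOn F (fun j i => A' i j) (e '' I)
  rw [← linearIndepOn_congr hcomp]
  exact ⟨fun hli => hli.image_of_comp, fun hli => hli.comp_of_image he.injOn⟩

theorem IsColMatroidOf.indep_singleton_iff (h : IsColMatroidOf N E A) {z : ℕ} :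
    N.Indep {z} ↔ z ∈ E ∧ (fun i => A i z) ≠ 0 := by
  rw [h.2, singleton_subset_iff, Finset.mem_coe]
  exact and_congr_right fun _ => linearIndepOn_singleton_iff F (v := fun j i => A i j)

theorem IsColMatroidOf.contract_elem (h : IsColMatroidOf N E A) {z r : ℕ} (hz : z ∈ E)
    (hr : A r z = 1) :
    IsColMatroidOf (N ／ {z}) (E.erase z) (fun i j => A i j - A r j * A i z) := by
  have hnl : N.IsNonloop z := indep_singleton.mp <| h.indep_singleton_iff.mpr
    ⟨hz, fun h0 => by simpa [hr] using congrFun h0 r⟩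
  refine ⟨by rw [contract_ground, h.1, Finset.coe_erase], fun I => ?_⟩
  rw [hnl.contractElem_indep_iff, h.2]
  change z ∉ I ∧ insert z I ⊆ ↑E ∧ LinearIndepOn F (fun j i => A i j) (insert z I) ↔
    I ⊆ ↑(E.erase z) ∧ LinearIndepOn F (fun j i => A i j - A r j * A i z) I
  by_cases hzI : z ∈ I
  · simp only [hzI, not_true, false_and, false_iff, Finset.coe_erase]
    exact fun hI => (hI.1 hzI).2 (mem_singleton z)
  rw [linearIndepOn_insert_iff_sub_smul hzI (LinearMap.proj r) hr, Finset.coe_erase,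
    insert_subset_iff, subset_sdiff, disjoint_singleton_right]
  exact ⟨fun ⟨_, ⟨_, hIE⟩, hli⟩ => ⟨⟨hIE, hzI⟩, hli⟩,
    fun ⟨⟨hIE, _⟩, hli⟩ => ⟨hzI, ⟨hz, hIE⟩, hli⟩⟩

theorem IsColMatroidOf.contract_eq_delete (h : IsColMatroidOf N E A) {z : ℕ} (hz : z ∈ E)
    (hA : ∀ i, A i z = 0) : N ／ {z} = N ＼ {z} := by
  have hzE : {z} ⊆ N.E := by simpa [h.1] using hz
  have hdep : N.Dep {z} := (not_indep_iff hzE).mp fun hind =>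
    (h.indep_singleton_iff.mp hind).2 (funext hA)
  exact contract_eq_delete_of_subset_loops (singleton_subset_iff.mpr (singleton_dep.mp hdep))

def consCol (c : ℕ → F) (D : ℕ → ℕ → F) : ℕ → ℕ → F
  | i, 0 => c i
  | i, k + 1 => D i k

theorem IsColMatroidOf.mIso_contract_consCol (hN : IsColMatroidOf N E A) {c : ℕ → F}
    {D : ℕ → ℕ → F} {r : ℕ} (hr : c r = 1) (hD : ∀ k ∈ E, ∀ i, D i k - D r k * c i = A i k)
    (hN' : IsColMatroidOf N' (insert 0 (E.image (· + 1))) (consCol c D)) :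
    MIso N (N' ／ {0}) := by
  have hcontr := hN'.contract_elem (Finset.mem_insert_self 0 _) hr
  rw [Finset.erase_insert (by simp)] at hcontr
  exact hN.mIso_of_injective hcontr (add_left_injective 1) hD

theorem consCol_support {c : ℕ → F} {D : ℕ → ℕ → F} (hc : ∀ i, c i ≠ 0 → i ∈ B)
    (hD : ∀ i k, D i k ≠ 0 → i ∈ B ∧ k ∈ E) (i j : ℕ) (h : consCol c D i j ≠ 0) :
    i ∈ B ∧ j ∈ insert 0 (E.image (· + 1)) := by
  cases j with
  | zero => exact ⟨hc i h, Finset.mem_insert_self _ _⟩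
  | succ k =>
    obtain ⟨hi, hk⟩ := hD i k h
    exact ⟨hi, Finset.mem_insert_of_mem (Finset.mem_image_of_mem _ hk)⟩

def IsColRep (M : Matroid α) (B E : Finset ℕ) (A : ℕ → ℕ → F) : Prop :=
  (∀ i j, A i j ≠ 0 → i ∈ B ∧ j ∈ E) ∧ ∃ N, IsColMatroidOf N E A ∧ MIso M N

end ColumnMatroids

section FrameColumns

variable {F : Type} [Field F] {S T : Set ℕ} {v : ℕ → F}

def TwoSupportedOn (S : Set ℕ) (v : ℕ → F) : Prop :=
  ∃ b₁ b₂, ∀ b ∈ S, v b ≠ 0 → b = b₁ ∨ b = b₂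

theorem TwoSupportedOn.mono (h : TwoSupportedOn S v) (hT : ∀ b ∈ T, v b ≠ 0 → b ∈ S) :
    TwoSupportedOn T v :=
  let ⟨b₁, b₂, h⟩ := h
  ⟨b₁, b₂, fun b hb hv => h b (hT b hb hv) hv⟩

theorem TwoSupportedOn.comp_equiv (h : TwoSupportedOn S v) (σ : ℕ ≃ ℕ) :
    TwoSupportedOn (σ ⁻¹' S) (v ∘ σ) :=
  let ⟨b₁, b₂, h⟩ := h
  ⟨σ.symm b₁, σ.symm b₂, fun b hb hv => by simpa [Equiv.eq_symm_apply] using h (σ b) hb hv⟩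

theorem IsFrameColOn.twoSupportedOn {Γ : Subgroup Fˣ} (h : IsFrameColOn Γ S v) :
    TwoSupportedOn S v := by
  rcases h with h | ⟨b, -, -, h⟩ | ⟨b₁, -, b₂, -, -, -, -, h⟩
  · exact ⟨0, 0, fun b hb hv => absurd (h b hb) hv⟩
  · exact ⟨b, b, fun b' hb' hv => .inl (not_imp_comm.mp (h b' hb') hv)⟩
  · exact ⟨b₁, b₂, fun b hb hv => by by_contra! hne; exact hv (h b hb hne.1 hne.2)⟩

theorem zmod_two_eq_zero_or_eq_one (x : ZMod 2) : x = 0 ∨ x = 1 := by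
  revert x; decide

theorem zmod_two_eq_one_of_ne_zero {x : ZMod 2} (hx : x ≠ 0) : x = 1 :=
  (zmod_two_eq_zero_or_eq_one x).resolve_left hx

theorem isUnitColOn_of_forall_eq {v : ℕ → ZMod 2} {b : ℕ} (hb : b ∈ S) (hv : v b ≠ 0)
    (h : ∀ b' ∈ S, v b' ≠ 0 → b' = b) : IsUnitColOn S v :=
  ⟨b, hb, zmod_two_eq_one_of_ne_zero hv, fun b' hb' hne => not_imp_comm.mp (h b' hb') hne⟩

theorem TwoSupportedOn.isFrameColOn_bot {v : ℕ → ZMod 2} (h : TwoSupportedOn S v) :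
    IsFrameColOn ⊥ S v := by
  obtain ⟨b₁, b₂, h⟩ := h
  by_cases h₁ : b₁ ∈ S ∧ v b₁ ≠ 0 <;> by_cases h₂ : b₂ ∈ S ∧ v b₂ ≠ 0
  · by_cases hb : b₁ = b₂
    · exact .inr <| .inl <| isUnitColOn_of_forall_eq h₁.1 h₁.2 fun b hb' hv => by
        rcases h b hb' hv with rfl | rfl <;> [rfl; exact hb.symm]
    · refine .inr <| .inr ⟨b₁, h₁.1, b₂, h₂.1, hb, zmod_two_eq_one_of_ne_zero h₁.2,
        ⟨1, one_mem _, ?_⟩, fun b hb' hne₁ hne₂ => ?_⟩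
      · rw [zmod_two_eq_one_of_ne_zero h₂.2, Units.val_one]; decide
      · by_contra hv
        rcases h b hb' hv with rfl | rfl <;> contradiction
  · exact .inr <| .inl <| isUnitColOn_of_forall_eq h₁.1 h₁.2 fun b hb' hv =>
      (h b hb' hv).resolve_right fun hb => h₂ (hb ▸ ⟨hb', hv⟩)
  · exact .inr <| .inl <| isUnitColOn_of_forall_eq h₂.1 h₂.2 fun b hb' hv =>
      (h b hb' hv).resolve_left fun hb => h₁ (hb ▸ ⟨hb', hv⟩)
  · exact .inl fun b hb' => by
      by_contra hv
      rcases h b hb' hv with rfl | rfl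
      exacts [h₁ ⟨hb', hv⟩, h₂ ⟨hb', hv⟩]

/-- The columns of matrices representing matroids that weakly conform to `Φ_{Y₁}`, whose
`X`-rows are `0` and `1`. -/
def IsY1Col (v : ℕ → F) : Prop :=
  (v 0 = 0 ∧ v 1 = 0 ∧ TwoSupportedOn univ v) ∨ ∃ b, ∀ i, v i ≠ 0 → i = b ∨ i = 0 ∨ i = 1

theorem TwoSupportedOn.isY1Col (h : TwoSupportedOn univ v) : IsY1Col v := by
  obtain ⟨b₁, b₂, hb⟩ := h
  by_cases h₁ : b₁ = 0 ∨ b₁ = 1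
  · exact .inr ⟨b₂, fun i hi => (hb i trivial hi).elim (fun e => .inr (e ▸ h₁)) .inl⟩
  by_cases h₂ : b₂ = 0 ∨ b₂ = 1
  · exact .inr ⟨b₁, fun i hi => (hb i trivial hi).elim .inl fun e => .inr (e ▸ h₂)⟩
  refine .inl ⟨?_, ?_, b₁, b₂, hb⟩ <;> by_contra hv <;>
    rcases hb _ trivial hv with e | e <;> simp_all

theorem IsY1Col.twoSupportedOn_compl_zero (h : IsY1Col v) : TwoSupportedOn {0}ᶜ v := by
  rcases h with ⟨-, -, h⟩ | ⟨b, h⟩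
  · exact h.mono fun _ _ _ => trivial
  · exact ⟨b, 1, fun i hi hv => (h i hv).imp_right (Or.resolve_left · hi)⟩

end FrameColumns

section Masks

variable {F : Type} [Field F]

@[simp]
theorem maskOn_zero (S : Finset ℕ) : maskOn S (0 : ℕ → F) = 0 :=
  funext fun i => by simp [maskOn]

@[simp]
theorem maskOn_empty (v : ℕ → F) : maskOn ∅ v = 0 :=
  funext fun i => by simp [maskOn]

theorem maskOn_mem_fullOn (S : Finset ℕ) (v : ℕ → F) : maskOn S v ∈ fullOn F S :=
  fun _ hi => if_neg hi

end Masks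

namespace FrameTemplate

section TemplateMinors

variable {F : Type} [Field F] {Φ Φ' : FrameTemplate F}

def SetsLE (Φ' Φ : FrameTemplate F) : Prop :=
  Φ'.C ⊆ Φ.C ∧ Φ'.X ⊆ Φ.X ∧ Φ'.Y0 ⊆ Φ.Y0 ∧ Φ'.Y1 ⊆ Φ.Y1

theorem SetsLE.trans {Φ'' : FrameTemplate F} (h : SetsLE Φ'' Φ') (h' : SetsLE Φ' Φ) :
    SetsLE Φ'' Φ :=
  ⟨h.1.trans h'.1, h.2.1.trans h'.2.1, h.2.2.1.trans h'.2.2.1, h.2.2.2.trans h'.2.2.2⟩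

theorem Step.setsLE (h : Step Φ Φ') : SetsLE Φ' Φ := by
  rcases h with ⟨-, hC, hX, hY0, hY1, -⟩ | ⟨-, hC, hX, hY0, hY1, -⟩ |
    ⟨-, hC, hX, hY0, hY1, -⟩ | ⟨_, -, -, hC, hX, hY0, hY1, -⟩ | ⟨_, -, -, hC, hX, hY0, hY1, -⟩ |
    ⟨_, -, -, -, hC, hX, hY0, hY1, -⟩ | ⟨_, -, _, -, -, -, -, -, hC, hX, hY0, hY1, -⟩ |
    ⟨_, -, -, -, -, hC, hX, hY0, hY1, -⟩ | ⟨_, -, -, hC, hX, hY0, hY1, -⟩ |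
    ⟨_, -, _, -, -, -, -, -, hC, hX, hY0, hY1, -⟩ |
    ⟨_, -, -, ⟨-, -, hC, hX, hY0, hY1, -⟩ | ⟨_, -, -, -, -, hC, hX, hY0, hY1, -⟩⟩ <;>
  simp only [SetsLE, hC, hX, hY0, hY1, Finset.erase_subset, subset_refl, and_self]

theorem IsTemplateMinor.setsLE (h : IsTemplateMinor Φ' Φ) : SetsLE Φ' Φ := by
  induction h with
  | refl => exact ⟨subset_refl _, subset_refl _, subset_refl _, subset_refl _⟩
  | tail _ hstep ih => exact hstep.setsLE.trans ih

theorem ElemRowOp.map_zero {X : Finset ℕ} {e : (ℕ → F) → ℕ → F} (he : ElemRowOp X e) :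
    e 0 = 0 := by
  rcases he with ⟨-, -, -, -, -, rfl⟩ | ⟨-, -, -, -, rfl⟩ | ⟨-, -, -, -, -, -, rfl⟩ <;>
    funext i <;> simp

theorem Step.Δ_eq_bot (h : Step Φ Φ') (hΔ : Φ.Δ = ⊥) : Φ'.Δ = ⊥ := by
  rcases h with ⟨-, -, -, -, -, -, h, -⟩ | ⟨-, -, -, -, -, -, h, -⟩ |
    ⟨-, -, -, -, -, -, h, -⟩ | ⟨_, -, -, -, -, -, -, -, h, -⟩ | ⟨_, -, -, -, -, -, -, -, h, -⟩ |
    ⟨_, -, -, -, -, -, -, -, -, h, -⟩ | ⟨_, -, _, -, -, -, -, -, -, -, -, -, -, -, h⟩ |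
    ⟨_, -, -, -, -, -, -, -, -, -, h, -⟩ | ⟨_, -, -, -, -, -, -, -, h, -⟩ |
    ⟨_, -, _, -, -, -, -, -, -, -, -, -, -, -, h⟩ |
    ⟨_, -, -, ⟨-, -, -, -, -, -, -, h, -⟩ | ⟨_, -, -, -, -, -, -, -, -, -, -, h⟩⟩
  all_goals first
    | exact h.trans hΔ
    | exact absurd (hΔ ▸ h) not_lt_bot
    | (apply SetLike.coe_injective; simp [h, hΔ])

theorem Step.Λ_eq_bot (h : Step Φ Φ') (hΛ : Φ.Λ = ⊥) : Φ'.Λ = ⊥ := by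
  rcases h with ⟨-, -, -, -, -, -, -, h⟩ | ⟨-, -, -, -, -, -, -, h⟩ |
    ⟨-, -, -, -, -, -, -, h⟩ | ⟨_, -, -, -, -, -, -, -, -, h⟩ | ⟨_, he, -, -, -, -, -, -, -, h⟩ |
    ⟨_, -, -, -, -, -, -, -, -, -, h⟩ | ⟨_, -, _, -, -, -, -, -, -, -, -, -, -, h, -⟩ |
    ⟨_, -, -, -, -, -, -, -, -, -, -, h⟩ | ⟨_, -, -, -, -, -, -, -, -, h⟩ |
    ⟨_, -, _, -, -, -, -, -, -, -, -, -, -, h, -⟩ |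
    ⟨_, -, -, ⟨-, -, -, -, -, -, -, -, h⟩ | ⟨_, -, -, -, -, -, -, -, -, -, h, -⟩⟩
  all_goals first
    | exact h.trans hΛ
    | exact absurd (hΛ ▸ h) not_lt_bot
    | (apply SetLike.coe_injective; simp [h, hΛ, he.map_zero])
    | (apply SetLike.coe_injective; simp [h, hΛ])

theorem IsTemplateMinor.Δ_eq_bot (h : IsTemplateMinor Φ' Φ) (hΔ : Φ.Δ = ⊥) : Φ'.Δ = ⊥ := by
  induction h with
  | refl => exact hΔ
  | tail _ hstep ih => exact hstep.Δ_eq_bot ih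

theorem IsTemplateMinor.Λ_eq_bot (h : IsTemplateMinor Φ' Φ) (hΛ : Φ.Λ = ⊥) : Φ'.Λ = ⊥ := by
  induction h with
  | refl => exact hΛ
  | tail _ hstep ih => exact hstep.Λ_eq_bot ih

end TemplateMinors

section Respecting

variable {F : Type} [Field F] {Φ : FrameTemplate F} {M : Matroid α} {B E Z : Finset ℕ}
  {A' A : ℕ → ℕ → F}

theorem vconforms_iff_of_Y1_eq_empty (hY1 : Φ.Y1 = ∅) :
    VConforms M Φ ↔ ∃ (B E : Finset ℕ) (A : ℕ → ℕ → F) (N : Matroid ℕ),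
      Φ.VRespects B E ∅ A ∧ IsColMatroidOf N E A ∧ MIso M (N ／ ↑Φ.C) := by
  constructor
  · rintro ⟨B, E, Z, A', A, N, N₁, hresp, hbuilt, hN, hcontr, hM⟩
    have hZ : Z = ∅ := Finset.eq_empty_of_forall_notMem fun j hj => by
      obtain ⟨y, hy, -⟩ := hbuilt.2 j hj
      simp [hY1] at hy
    subst hZ
    have hA : A = A' := funext fun i => funext fun j => hbuilt.1 j (Finset.notMem_empty j) i
    subst hA
    rw [hcontr.eq_contract, hY1, Finset.coe_empty, sdiff_empty, restrict_ground_eq_self] at hM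
    exact ⟨B, E, A, N, hresp, hN, hM⟩
  · rintro ⟨B, E, A, N, hresp, hN, hM⟩
    refine ⟨B, E, ∅, A, A, N, N ／ ↑Φ.C, hresp, ⟨fun _ _ _ => rfl, by simp⟩, hN,
      isContraction_contract _ _, ?_⟩
    rwa [hY1, Finset.coe_empty, sdiff_empty, restrict_ground_eq_self]

theorem VRespects.twoSupportedOn_compl (h : Φ.VRespects B E Z A') {j : ℕ} (hj : j ∈ E)
    (hjC : j ∉ Φ.CY) (hjZ : j ∉ Z) : TwoSupportedOn (↑Φ.X)ᶜ fun i => A' i j := by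
  obtain ⟨-, -, -, -, hsupp, -, -, -, hframe, -, -⟩ := h
  exact (hframe j hj hjC hjZ).twoSupportedOn.mono fun b hb hv => ⟨(hsupp b j hv).1, hb⟩

theorem VRespects.eq_zero_of_Δ_eq_bot (h : Φ.VRespects B E Z A') (hΔ : Φ.Δ = ⊥) {i y : ℕ}
    (hi : i ∉ Φ.X) (hy : y ∈ Φ.CY) : A' i y = 0 := by
  obtain ⟨-, -, -, -, hsupp, -, -, -, -, -, hDel⟩ := h
  by_cases hiB : i ∈ B
  · have hrow := hDel i hiB hi
    rw [hΔ, AddSubgroup.mem_bot] at hrow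
    simpa [maskOn, hy] using congrFun hrow y
  · exact not_not.mp fun h => hiB (hsupp i y h).1

theorem VRespects.eq_zero_of_Λ_eq_bot (h : Φ.VRespects B E Z A') (hΛ : Φ.Λ = ⊥) {j x : ℕ}
    (hj : j ∈ E) (hjC : j ∉ Φ.CY) (hjZ : j ∉ Z) (hx : x ∈ Φ.X) : A' x j = 0 := by
  obtain ⟨-, -, -, -, -, -, -, -, -, hLam, -⟩ := h
  have hcol := hLam j hj hjC hjZ
  rw [hΛ, AddSubgroup.mem_bot] at hcol
  simpa [maskOn, hx] using congrFun hcol x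

theorem BuiltFrom.support (h : Φ.BuiltFrom Z A' A) (hsupp : ∀ i j, A' i j ≠ 0 → i ∈ B ∧ j ∈ E)
    (hZE : Z ⊆ E) (i j : ℕ) (hA : A i j ≠ 0) : i ∈ B ∧ j ∈ E := by
  by_cases hjZ : j ∈ Z
  · obtain ⟨y, -, hAj⟩ := h.2 j hjZ
    refine ⟨not_not.mp fun hiB => hA ?_, hZE hjZ⟩
    rw [hAj, not_not.mp fun h => hiB (hsupp i j h).1, not_not.mp fun h => hiB (hsupp i y h).1,
      add_zero]
  · exact hsupp i j (h.1 j hjZ i ▸ hA)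

end Respecting

section Saturated

/-- `Λ = F^X` and `Δ = F^C`. -/
def IsSaturated (Φ : FrameTemplate (ZMod 2)) : Prop :=
  Φ.Γ = ⊥ ∧ Φ.Y0 = ∅ ∧ Φ.Y1 = ∅ ∧ (∀ v, maskOn Φ.X v ∈ Φ.Λ) ∧ ∀ v, maskOn Φ.C v ∈ Φ.Δ

theorem isSaturated_PhiX : IsSaturated PhiX :=
  ⟨rfl, rfl, rfl, maskOn_mem_fullOn _, fun v => by simp [PhiX]⟩

theorem isSaturated_PhiC : IsSaturated PhiC :=
  ⟨rfl, rfl, rfl, fun v => by simp [PhiC], maskOn_mem_fullOn _⟩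

theorem isSaturated_PhiCX : IsSaturated PhiCX :=
  ⟨rfl, rfl, rfl, maskOn_mem_fullOn _, maskOn_mem_fullOn _⟩

variable {Φ : FrameTemplate (ZMod 2)} {M : Matroid α} {N : Matroid ℕ} {B E : Finset ℕ}
  {A : ℕ → ℕ → ZMod 2}

theorem IsSaturated.vconforms (hΦ : IsSaturated Φ) (hN : IsColMatroidOf N E A)
    (hM : MIso M (N ／ ↑Φ.C)) (hXB : Φ.X ⊆ B) (hCE : Φ.C ⊆ E)
    (hsupp : ∀ i j, A i j ≠ 0 → i ∈ B ∧ j ∈ E)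
    (hA1 : ∀ i ∈ Φ.X, ∀ j ∈ Φ.C, A i j = Φ.A1 i j)
    (hframe : ∀ j ∈ E, j ∉ Φ.C → TwoSupportedOn (↑Φ.X)ᶜ fun i => A i j) :
    VConforms M Φ := by
  obtain ⟨hΓ, hY0, hY1, hΛ, hΔ⟩ := hΦ
  have hCY : Φ.CY = Φ.C := by simp [CY, hY0, hY1]
  refine (vconforms_iff_of_Y1_eq_empty hY1).mpr ⟨B, E, A, N, ⟨hXB, hCY ▸ hCE,
    Finset.empty_subset _, Finset.disjoint_empty_left _, hsupp, hCY ▸ hA1, by simp, by simp,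
    fun j hj hjC _ => ?_, fun j _ _ _ => hΛ _, fun i _ _ => hCY ▸ hΔ _⟩, hN, hM⟩
  rw [hΓ]
  exact ((hframe j hj (hCY ▸ hjC)).mono fun b hb _ => hb.2).isFrameColOn_bot

theorem IsSaturated.vconforms_consCol (hΦ : IsSaturated Φ) (hC : Φ.C = {0})
    (hN : IsColMatroidOf N E A) (hM : MIso M N) {c : ℕ → ZMod 2} {D : ℕ → ℕ → ZMod 2}
    {r : ℕ} (hr : c r = 1) (hD : ∀ k ∈ E, ∀ i, D i k - D r k * c i = A i k)
    (hXB : Φ.X ⊆ B) (hc : ∀ i, c i ≠ 0 → i ∈ B) (hDsupp : ∀ i k, D i k ≠ 0 → i ∈ B ∧ k ∈ E)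
    (hA1 : ∀ i ∈ Φ.X, c i = Φ.A1 i 0)
    (hframe : ∀ k ∈ E, TwoSupportedOn (↑Φ.X)ᶜ fun i => D i k) : VConforms M Φ := by
  obtain ⟨N', hN'⟩ := exists_isColMatroidOf (insert 0 (E.image (· + 1))) (consCol c D)
  have hM' : MIso M (N' ／ ↑Φ.C) := by
    rw [hC, Finset.coe_singleton]
    exact hM.trans (hN.mIso_contract_consCol hr hD hN')
  refine hΦ.vconforms hN' hM' hXB (by simp [hC]) (consCol_support hc hDsupp)
    (fun i hi j hj => ?_) fun j hj hjC => ?_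
  · rw [hC, Finset.mem_singleton] at hj
    subst hj
    exact hA1 i hi
  · rw [hC, Finset.mem_singleton] at hjC
    obtain ⟨k, hk, rfl⟩ : ∃ k ∈ E, k + 1 = j := by simpa [hjC] using hj
    exact hframe k hk

end Saturated

section Sources

variable {M : Matroid α}

theorem WConforms.exists_isColRep_PhiX (h : WConforms M PhiX) :
    ∃ (B E : Finset ℕ) (A : ℕ → ℕ → ZMod 2),
      IsColRep M B E A ∧ ∀ j ∈ E, TwoSupportedOn {0}ᶜ fun i => A i j := by
  obtain ⟨Φ, hmin, hconf⟩ := h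
  obtain ⟨hC, hX, hY0, hY1⟩ := hmin.setsLE
  simp only [PhiX, Finset.subset_empty] at hC hX hY0 hY1
  obtain ⟨B, E, A, N, hresp, hN, hM⟩ := (vconforms_iff_of_Y1_eq_empty hY1).mp hconf
  refine ⟨B, E, A, ⟨hresp.2.2.2.2.1, N, hN, by simpa [hC] using hM⟩, fun j hj => ?_⟩
  refine (hresp.twoSupportedOn_compl hj (by simp [CY, hC, hY0, hY1])
    (Finset.notMem_empty j)).mono fun b hb _ hbX => hb (by simpa using hX hbX)

theorem WConforms.exists_isColRep_PhiY0 (h : WConforms M PhiY0) :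
    ∃ (B E : Finset ℕ) (A : ℕ → ℕ → ZMod 2),
      IsColRep M B E A ∧ ∀ j ∈ E, j ≠ 0 → TwoSupportedOn univ fun i => A i j := by
  obtain ⟨Φ, hmin, hconf⟩ := h
  obtain ⟨hC, hX, hY0, hY1⟩ := hmin.setsLE
  simp only [PhiY0, Finset.subset_empty] at hC hX hY0 hY1
  obtain ⟨B, E, A, N, hresp, hN, hM⟩ := (vconforms_iff_of_Y1_eq_empty hY1).mp hconf
  refine ⟨B, E, A, ⟨hresp.2.2.2.2.1, N, hN, by simpa [hC] using hM⟩, fun j hj hj0 => ?_⟩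
  have hjC : j ∉ Φ.CY := fun hjC => hj0 (by simpa using hY0 (by simpa [CY, hC, hY1] using hjC))
  simpa [hX] using hresp.twoSupportedOn_compl hj hjC (Finset.notMem_empty j)

theorem WConforms.exists_isColRep_PhiC (h : WConforms M PhiC) :
    (∃ (B E : Finset ℕ) (A : ℕ → ℕ → ZMod 2),
      IsColRep M B E A ∧ ∀ j ∈ E, TwoSupportedOn univ fun i => A i j) ∨
    ∃ (B E : Finset ℕ) (A : ℕ → ℕ → ZMod 2) (N : Matroid ℕ),
      (∀ i j, A i j ≠ 0 → i ∈ B ∧ j ∈ E) ∧ IsColMatroidOf N E A ∧ MIso M (N ／ {0}) ∧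
      0 ∈ E ∧ ∀ j ∈ E, j ≠ 0 → TwoSupportedOn univ fun i => A i j := by
  obtain ⟨Φ, hmin, hconf⟩ := h
  obtain ⟨hC, hX, hY0, hY1⟩ := hmin.setsLE
  simp only [PhiC, Finset.subset_empty] at hC hX hY0 hY1
  obtain ⟨B, E, A, N, hresp, hN, hM⟩ := (vconforms_iff_of_Y1_eq_empty hY1).mp hconf
  have hCY : Φ.CY = Φ.C := by simp [CY, hY0, hY1]
  have hcol : ∀ j ∈ E, j ∉ Φ.C → TwoSupportedOn univ fun i => A i j := fun j hj hjC => by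
    simpa [hX] using hresp.twoSupportedOn_compl hj (hCY ▸ hjC) (Finset.notMem_empty j)
  rcases Finset.subset_singleton_iff.mp hC with hC | hC
  · exact .inl ⟨B, E, A, ⟨hresp.2.2.2.2.1, N, hN, by simpa [hC] using hM⟩,
      fun j hj => hcol j hj (by simp [hC])⟩
  · exact .inr ⟨B, E, A, N, hresp.2.2.2.2.1, hN, by simpa [hC] using hM,
      hresp.2.1 (by simp [hCY, hC]), fun j hj hj0 => hcol j hj (by simpa [hC] using hj0)⟩

theorem WConforms.exists_isColRep_PhiY1 (h : WConforms M PhiY1) :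
    ∃ (B E : Finset ℕ) (A : ℕ → ℕ → ZMod 2),
      IsColRep M B E A ∧ ∀ j ∈ E, IsY1Col fun i => A i j := by
  obtain ⟨Φ, hmin, B, E, Z, A', A, N, N₁, hresp, hbuilt, hN, hcontr, hM⟩ := h
  obtain ⟨hC, hX, hY0, -⟩ := hmin.setsLE
  simp only [PhiY1, Finset.subset_empty] at hC hY0
  rw [hcontr.eq_contract, hC, Finset.coe_empty, contract_empty] at hM
  have hCY : Φ.CY = Φ.Y1 := by simp [CY, hC, hY0]
  have hsupp' := hresp.2.2.2.2.1
  have hsupp := hbuilt.support hsupp' hresp.2.2.1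
  refine ⟨B, E \ Φ.Y1, fun i j => if j ∈ Φ.Y1 then 0 else A i j, ⟨fun i j hA => ?_,
    N ＼ ↑Φ.Y1, (hN.delete Φ.Y1).congr fun j hj i => if_neg (Finset.mem_sdiff.mp hj).2, hM⟩,
    fun j hj => ?_⟩
  · by_cases hjY : j ∈ Φ.Y1
    · simp [hjY] at hA
    · simp only [hjY, if_false] at hA
      exact ⟨(hsupp i j hA).1, Finset.mem_sdiff.mpr ⟨(hsupp i j hA).2, hjY⟩⟩
  obtain ⟨hjE, hjY⟩ := Finset.mem_sdiff.mp hj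
  simp only [if_neg hjY]
  by_cases hjZ : j ∈ Z
  · obtain ⟨y, hy, hAj⟩ := hbuilt.2 j hjZ
    obtain ⟨b, hb⟩ : ∃ b, ∀ i ∈ (↑B : Set ℕ) \ ↑Φ.X, A' i j ≠ 0 → i = b := by
      rcases hresp.2.2.2.2.2.2.2.1 j hjZ with h0 | ⟨b, -, -, hb⟩
      · exact ⟨0, fun i hi hv => absurd (h0 i hi) hv⟩
      · exact ⟨b, fun i hi hv => not_imp_comm.mp (hb i hi) hv⟩
    refine .inr ⟨b, fun i hi => ?_⟩
    by_cases hiX : i ∈ Φ.X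
    · exact .inr (by simpa [PhiY1] using hX hiX)
    change A i j ≠ 0 at hi
    rw [hAj, hresp.eq_zero_of_Δ_eq_bot (hmin.Δ_eq_bot rfl) hiX (y := y) (hCY ▸ hy),
      add_zero] at hi
    exact .inl (hb i ⟨(hsupp' i j hi).1, hiX⟩ hi)
  · rw [show (fun i => A i j) = fun i => A' i j from funext (hbuilt.1 j hjZ)]
    refine ((hresp.twoSupportedOn_compl hjE (hCY ▸ hjY) hjZ).mono
      fun b _ hb hbX => hb ?_).isY1Col
    exact hresp.eq_zero_of_Λ_eq_bot (hmin.Λ_eq_bot rfl) hjE (hCY ▸ hjY) hjZ hbX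

end Sources

end FrameTemplate

section Targets

variable {M : Matroid α} {N : Matroid ℕ} {B E : Finset ℕ} {A : ℕ → ℕ → ZMod 2}

theorem IsColRep.vconforms_PhiX (hA : IsColRep M B E A)
    (hcol : ∀ j ∈ E, TwoSupportedOn {0}ᶜ fun i => A i j) : VConforms M PhiX := by
  obtain ⟨hsupp, N, hN, hM⟩ := hA
  refine isSaturated_PhiX.vconforms (B := insert 0 B) hN (by simpa [PhiX] using hM)
    (by simp [PhiX]) (by simp [PhiX]) (fun i j h => ⟨Finset.mem_insert_of_mem (hsupp i j h).1,
      (hsupp i j h).2⟩) (by simp [PhiX]) fun j hj _ => by simpa [PhiX] using hcol j hj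

theorem IsColRep.vconforms_PhiCX (hA : IsColRep M B E A)
    (hcol : ∀ j ∈ E, TwoSupportedOn {0}ᶜ fun i => A i j) : VConforms M PhiCX := by
  obtain ⟨hsupp, N, hN, hM⟩ := hA
  obtain ⟨r, hr⟩ := Infinite.exists_notMem_finset (insert 0 (insert 1 B))
  simp only [Finset.mem_insert, not_or] at hr
  obtain ⟨hr0, hr1, hrB⟩ := hr
  -- the `X`-row `0` becomes row `1`, and the contracted column is `e₁ + e_r`
  let σ := Equiv.swap 0 1
  have hσr : σ r = r := Equiv.swap_apply_of_ne_of_ne hr0 hr1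
  refine isSaturated_PhiCX.vconforms_consCol rfl (hN.comp_equiv σ) hM
    (c := fun i => if i = 1 ∨ i = r then 1 else 0) (D := fun i k => A (σ i) k) (r := r)
    (B := insert r (insert 1 (B.image σ)))
    (by simp) (fun k _ i => ?_) (by simp [PhiCX]) (fun i hi => ?_) (fun i k hik => ?_)
    (by simp [PhiCX]) fun k hk => ?_
  · rw [hσr, not_not.mp fun h => hrB (hsupp r k h).1, zero_mul, sub_zero]
  · have : i = 1 ∨ i = r := by by_contra h; simp [h] at hi
    rcases this with rfl | rfl <;> simp
  · obtain ⟨hi, hk⟩ := hsupp _ k hik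
    exact ⟨Finset.mem_insert_of_mem (Finset.mem_insert_of_mem
      (Finset.mem_image.mpr ⟨σ i, hi, Equiv.swap_apply_self _ _ _⟩)), hk⟩
  · refine ((hcol k hk).comp_equiv σ).mono fun b hb _ => ?_
    simpa [PhiCX, σ, Equiv.swap_apply_eq_iff] using hb

theorem vconforms_PhiCX_of_contract_of_ne_zero (hsupp : ∀ i j, A i j ≠ 0 → i ∈ B ∧ j ∈ E)
    (hN : IsColMatroidOf N E A) (hM : MIso M (N ／ {0})) (h0 : 0 ∈ E) {s : ℕ}
    (hs : A s 0 ≠ 0) (hcol : ∀ j ∈ E, j ≠ 0 → TwoSupportedOn univ fun i => A i j) :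
    VConforms M PhiCX := by
  let σ := Equiv.swap s 1
  refine isSaturated_PhiCX.vconforms (B := B.image σ) (hN.comp_equiv σ)
    (by simpa [PhiCX] using hM) ?_ (by simpa [PhiCX] using h0) (fun i j h => ?_) ?_
    fun j hj hj0 => ?_
  · simpa [PhiCX] using ⟨s, (hsupp s 0 hs).1, Equiv.swap_apply_left s 1⟩
  · obtain ⟨hi, hj⟩ := hsupp _ j h
    exact ⟨Finset.mem_image.mpr ⟨σ i, hi, Equiv.swap_apply_self _ _ _⟩, hj⟩
  · simp [PhiCX, σ, zmod_two_eq_one_of_ne_zero hs]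
  · exact ((hcol j hj (by simpa [PhiCX] using hj0)).comp_equiv σ).mono fun _ _ _ => trivial

theorem isColRep_of_contract_of_eq_zero (hsupp : ∀ i j, A i j ≠ 0 → i ∈ B ∧ j ∈ E)
    (hN : IsColMatroidOf N E A) (hM : MIso M (N ／ {0})) (h0 : 0 ∈ E) (hA : ∀ i, A i 0 = 0) :
    IsColRep M B (E \ {0}) A := by
  refine ⟨fun i j h => ⟨(hsupp i j h).1, Finset.mem_sdiff.mpr ⟨(hsupp i j h).2, ?_⟩⟩, _,
    hN.delete {0}, ?_⟩
  · rintro hj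
    rw [Finset.mem_singleton.mp hj] at h
    exact h (hA i)
  · rwa [Finset.coe_singleton, ← hN.contract_eq_delete h0 hA]

theorem IsColRep.vconforms_PhiC_of_twoSupportedOn_of_ne_zero (hA : IsColRep M B E A)
    (hcol : ∀ j ∈ E, j ≠ 0 → TwoSupportedOn univ fun i => A i j) : VConforms M PhiC := by
  obtain ⟨hsupp, N, hN, hM⟩ := hA
  obtain ⟨r, hr⟩ := Infinite.exists_notMem_finset B
  have hAr : ∀ k, A r k = 0 := fun k => not_not.mp fun h => hr (hsupp r k h).1
  let er : ℕ → ZMod 2 := fun i => if i = r then 1 else 0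
  -- column `0` of `A` is absorbed by the contracted column, and replaced by the unit column `e_r`
  refine isSaturated_PhiC.vconforms_consCol rfl hN hM (c := fun i => A i 0 + er i)
    (D := fun i k => if k = 0 ∧ 0 ∈ E then er i else A i k) (r := r) (B := insert r B)
    (by simp [er, hAr]) (fun k hk i => ?_) (by simp [PhiC]) (fun i hi => ?_)
    (fun i k hik => ?_) (by simp [PhiC]) fun k hk => ?_
  · by_cases hk0 : k = 0
    · subst hk0
      simp [hk, er]
    · simp [hk0, hAr]
  · by_cases hir : i = r
    · exact hir ▸ Finset.mem_insert_self r B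
    · exact Finset.mem_insert_of_mem (hsupp i 0 (by simpa [er, hir] using hi)).1
  · split_ifs at hik with hk
    · have hir : i = r := by by_contra h; simp [er, h] at hik
      exact ⟨hir ▸ Finset.mem_insert_self r B, hk.1 ▸ hk.2⟩
    · exact ⟨Finset.mem_insert_of_mem (hsupp i k hik).1, (hsupp i k hik).2⟩
  · split_ifs with hk0
    · exact ⟨r, r, fun i _ hi => .inl (by by_contra h; simp [er, h] at hi)⟩
    · exact (hcol k hk fun h => hk0 ⟨h, h ▸ hk⟩).mono fun b _ hb => mem_univ b

theorem IsColRep.vconforms_PhiC_of_isY1Col (hA : IsColRep M B E A)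
    (hcol : ∀ j ∈ E, IsY1Col fun i => A i j) : VConforms M PhiC := by
  obtain ⟨hsupp, N, hN, hM⟩ := hA
  obtain ⟨r, hr⟩ := Infinite.exists_notMem_finset (insert 0 (insert 1 B))
  simp only [Finset.mem_insert, not_or] at hr
  obtain ⟨hr0, hr1, hrB⟩ := hr
  have hAr : ∀ k, A r k = 0 := fun k => not_not.mp fun h => hrB (hsupp r k h).1
  let w : ℕ → ZMod 2 := fun i => if i = 0 ∨ i = 1 ∨ i = r then 1 else 0
  have hwr : w r = 1 := by simp [w]
  refine isSaturated_PhiC.vconforms_consCol rfl hN hM (c := w)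
    (D := fun i k => A i k + A 0 k * A 1 k * w i) (r := r)
    (B := insert 0 (insert 1 (insert r B))) hwr (fun k _ i => by rw [hAr, hwr]; ring)
    (by simp [PhiC]) (fun i hi => ?_) (fun i k hik => ?_) (by simp [PhiC]) fun k hk => ?_
  · have : i = 0 ∨ i = 1 ∨ i = r := by by_contra h; simp [w, h] at hi
    rcases this with rfl | rfl | rfl <;> simp
  · by_cases hAik : A i k = 0
    · have hp : A 0 k ≠ 0 := fun h => by simp [h, hAik] at hik
      have hwi : w i ≠ 0 := fun h => by simp [h, hAik] at hik
      have : i = 0 ∨ i = 1 ∨ i = r := by by_contra h; simp [w, h] at hwi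
      refine ⟨?_, (hsupp 0 k hp).2⟩
      rcases this with rfl | rfl | rfl <;> simp
    · exact ⟨by simp [(hsupp i k hAik).1], (hsupp i k hAik).2⟩
  · rcases hcol k hk with ⟨h0, -, h⟩ | ⟨b, hb⟩
    · simpa [PhiC, h0] using h
    -- over `GF(2)`, rows `0, 1, r` of the new column hold `p + pq, q + pq, pq`: at most one is `1`
    refine ⟨b, if A 1 k = 0 then 0 else if A 0 k = 0 then 1 else r, fun i _ hi => ?_⟩
    by_cases hiT : i = 0 ∨ i = 1 ∨ i = r
    · right
      rcases hiT with rfl | rfl | rfl <;>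
        rcases zmod_two_eq_zero_or_eq_one (A 0 k) with hp | hp <;>
        rcases zmod_two_eq_zero_or_eq_one (A 1 k) with hq | hq <;>
        simp_all [w, CharTwo.add_self_eq_zero]
    · left
      have hAik : A i k ≠ 0 := by simpa [w, hiT] using hi
      simp only [not_or] at hiT
      simpa [hiT.1, hiT.2.1] using hb i hAik

end Targets

namespace FrameTemplate

theorem preceq_PhiY1_PhiX : Preceq PhiY1 PhiX := fun _ _ h => by
  obtain ⟨B, E, A, hA, hcol⟩ := h.exists_isColRep_PhiY1
  exact ⟨PhiX, .refl, hA.vconforms_PhiX fun j hj => (hcol j hj).twoSupportedOn_compl_zero⟩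

theorem preceq_PhiY1_PhiC : Preceq PhiY1 PhiC := fun _ _ h => by
  obtain ⟨B, E, A, hA, hcol⟩ := h.exists_isColRep_PhiY1
  exact ⟨PhiC, .refl, hA.vconforms_PhiC_of_isY1Col hcol⟩

theorem preceq_PhiY0_PhiC : Preceq PhiY0 PhiC := fun _ _ h => by
  obtain ⟨B, E, A, hA, hcol⟩ := h.exists_isColRep_PhiY0
  exact ⟨PhiC, .refl, hA.vconforms_PhiC_of_twoSupportedOn_of_ne_zero hcol⟩

theorem preceq_PhiX_PhiCX : Preceq PhiX PhiCX := fun _ _ h => by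
  obtain ⟨B, E, A, hA, hcol⟩ := h.exists_isColRep_PhiX
  exact ⟨PhiCX, .refl, hA.vconforms_PhiCX hcol⟩

theorem preceq_PhiC_PhiCX : Preceq PhiC PhiCX := fun _ _ h => by
  refine ⟨PhiCX, .refl, ?_⟩
  rcases h.exists_isColRep_PhiC with ⟨B, E, A, hA, hcol⟩ |
    ⟨B, E, A, N, hsupp, hN, hM, h0, hcol⟩
  · exact hA.vconforms_PhiCX fun j hj => (hcol j hj).mono fun _ _ _ => trivial
  by_cases hA0 : ∀ i, A i 0 = 0
  · refine (isColRep_of_contract_of_eq_zero hsupp hN hM h0 hA0).vconforms_PhiCX fun j hj => ?_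
    obtain ⟨hjE, hj0⟩ := Finset.mem_sdiff.mp hj
    exact (hcol j hjE (by simpa using hj0)).mono fun _ _ _ => trivial
  · obtain ⟨s, hs⟩ := not_forall.mp hA0
    exact vconforms_PhiCX_of_contract_of_ne_zero hsupp hN hM h0 hs hcol

end FrameTemplate

open FrameTemplate in
/-- The relations `Φ_{Y₁} ⪯ Φ_X`, `Φ_{Y₁} ⪯ Φ_C`, `Φ_{Y₀} ⪯ Φ_C`,
`Φ_C ⪯ Φ_{CX}`, and `Φ_X ⪯ Φ_{CX}` hold. -/
theorem template_relations :
    Preceq PhiY1 PhiX ∧ Preceq PhiY1 PhiC ∧ Preceq PhiY0 PhiC ∧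
      Preceq PhiC PhiCX ∧ Preceq PhiX PhiCX := by
  exact ⟨preceq_PhiY1_PhiX, preceq_PhiY1_PhiC, preceq_PhiY0_PhiC, preceq_PhiC_PhiCX,
    preceq_PhiX_PhiCX⟩

end TemplatePaper
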